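/- Fix m ≥ 3 mean times between false alarms 1 ≤ τ_1 < ⋯ < τ_m, c_F > 0, and a single attacker type with payoffs 0 < I_1 < I_2 < ⋯ < I_m. For each index i ∈ {1,…,m−1} define Q(i) = 1 − Σ_{l=i+1}^m (c_F/I_l)·(1/τ_{l−1} − 1/τ_l). Assume Q(1) < 0 and (c_F/I_m)·(1/τ_{m−1} − 1/τ_m) < 1. Then there exists a unique index i* with 1 < i* < m such that 0 ≤ Q(i*) < (c_F/I_{i*})·(1/τ_{i*−1} − 1/τ_{i*}); moreover, i* is the smallest index i for which Q(i) ∈ [0,1), and Q(i) < 0 for every i < i*. -/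
import Mathlib


open Matrix BigOperators

/-- A (mixed strategy) probability vector: nonnegative entries summing to one. -/
def IsProbVec {m : ℕ} (p : Fin m → ℝ) : Prop := (∀ i, 0 ≤ p i) ∧ ∑ i, p i = 1

/-- The previous index `j - 1` (mapping `0` to `0`). -/
def prevF {m : ℕ} (j : Fin m) : Fin m := ⟨(j : ℕ) - 1, lt_of_le_of_lt (Nat.sub_le _ _) j.isLt⟩

/-- Defender cost matrix for a single attacker type: `Ω_{i,j} = c_F/τ_i + 1{j ≤ i}·I_j`. -/
noncomputable def OmegaS {m : ℕ} (τ : Fin m → ℝ) (cF : ℝ) (I : Fin m → ℝ) :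
    Matrix (Fin m) (Fin m) ℝ :=
  Matrix.of fun i j => cF / τ i + if j ≤ i then I j else 0

/-- Attacker payoff matrix for a single attacker type: `Υ_{i,j} = 1{j ≤ i}·I_j`. -/
noncomputable def UpsilonS {m : ℕ} (I : Fin m → ℝ) : Matrix (Fin m) (Fin m) ℝ :=
  Matrix.of fun i j => if j ≤ i then I j else 0

/-- The closed-form attacker mixed strategy of the paper's Lemma 4 (Equation (16)):
`q_j = (c_F/I_j)(1/τ_{j-1} - 1/τ_j)` for `j > i`, `q_i = 1 - Σ_{l > i} q_l`, `q_j = 0` for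
`j < i`. -/
noncomputable def qstar {m : ℕ} (τ : Fin m → ℝ) (I : Fin m → ℝ) (cF : ℝ) (i : Fin m) :
    Fin m → ℝ := fun j =>
  if j < i then 0
  else if j = i then 1 - ∑ l ∈ Finset.Ioi i, cF / I l * (1 / τ (prevF l) - 1 / τ l)
  else cF / I j * (1 / τ (prevF j) - 1 / τ j)

/-- The probability mass `Q(i) = 1 - Σ_{l>i} (c_F/I_l)(1/τ_{l-1} - 1/τ_l)` that the closed-form
attacker equilibrium strategy places on index `i`. -/
noncomputable def Qmass {m : ℕ} (τ : Fin m → ℝ) (I : Fin m → ℝ) (cF : ℝ) (i : Fin m) : ℝ :=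
  1 - ∑ l ∈ Finset.Ioi i, cF / I l * (1 / τ (prevF l) - 1 / τ l)

/-- Lemma 5: if `Q(1) < 0` and `(c_F/I_m)(1/τ_{m-1} - 1/τ_m) < 1`, then there is a unique
index `i*` with `1 < i* < m` such that `0 ≤ Q(i*) < (c_F/I_{i*})(1/τ_{i*-1} - 1/τ_{i*})`;
moreover `i*` is the smallest index with `Q(i) ∈ [0,1)`, and `Q(i) < 0` for all `i < i*`. -/
theorem unique_index_for_q (m : ℕ) (hm : 3 ≤ m)
    (τ : Fin m → ℝ) (hτmono : StrictMono τ) (hτ1 : 1 ≤ τ ⟨0, by omega⟩)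
    (cF : ℝ) (hcF : 0 < cF)
    (I : Fin m → ℝ) (hI0 : 0 < I ⟨0, by omega⟩) (hImono : StrictMono I)
    (hQ1 : Qmass τ I cF ⟨0, by omega⟩ < 0)
    (hlastterm : cF / I ⟨m - 1, by omega⟩ *
      (1 / τ (prevF ⟨m - 1, by omega⟩) - 1 / τ ⟨m - 1, by omega⟩) < 1) :
    ∃ istar : Fin m, 0 < (istar : ℕ) ∧ (istar : ℕ) < m - 1 ∧
      (0 ≤ Qmass τ I cF istar ∧
        Qmass τ I cF istar < cF / I istar * (1 / τ (prevF istar) - 1 / τ istar)) ∧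
      (∀ j : Fin m, 0 < (j : ℕ) → (j : ℕ) < m - 1 →
        (0 ≤ Qmass τ I cF j ∧ Qmass τ I cF j < cF / I j * (1 / τ (prevF j) - 1 / τ j)) →
        j = istar) ∧
      (0 ≤ Qmass τ I cF istar ∧ Qmass τ I cF istar < 1) ∧
      (∀ j : Fin m, (0 ≤ Qmass τ I cF j ∧ Qmass τ I cF j < 1) → istar ≤ j) ∧
      (∀ j : Fin m, j < istar → Qmass τ I cF j < 0) := by
  -- abbreviation for the positive terms
  set t : Fin m → ℝ := fun j => cF / I j * (1 / τ (prevF j) - 1 / τ j) with ht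
  have hτpos : ∀ j : Fin m, 0 < τ j := by
    intro j
    have h0j : (⟨0, by omega⟩ : Fin m) ≤ j := Fin.mk_le_of_le_val (Nat.zero_le _)
    exact lt_of_lt_of_le one_pos (le_trans hτ1 (hτmono.monotone h0j))
  have hIpos : ∀ j : Fin m, 0 < I j := by
    intro j
    have h0j : (⟨0, by omega⟩ : Fin m) ≤ j := Fin.mk_le_of_le_val (Nat.zero_le _)
    exact lt_of_lt_of_le hI0 (hImono.monotone h0j)
  have htpos : ∀ j : Fin m, 0 < (j : ℕ) → 0 < t j := by
    intro j hj
    have hprev : prevF j < j := by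
      simp only [Fin.lt_def, prevF]; omega
    have hτlt : τ (prevF j) < τ j := hτmono hprev
    have h1 : 1 / τ j < 1 / τ (prevF j) :=
      one_div_lt_one_div_of_lt (hτpos _) hτlt
    exact mul_pos (div_pos hcF (hIpos j)) (sub_pos.mpr h1)
  have hstep : ∀ i j : Fin m, (j : ℕ) = (i : ℕ) + 1 →
      Qmass τ I cF i = Qmass τ I cF j - t j := by
    intro i j hij
    have hset : Finset.Ioi i = insert j (Finset.Ioi j) := by
      ext l
      simp only [Finset.mem_Ioi, Finset.mem_insert, Fin.lt_def, Fin.ext_iff]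
      omega
    have hnot : j ∉ Finset.Ioi j := by simp
    simp only [Qmass, hset, Finset.sum_insert hnot, ht]
    ring
  have hmono : ∀ i j : Fin m, i < j → Qmass τ I cF i < Qmass τ I cF j := by
    intro i j hij
    have hsplit : Finset.Ioi i = Finset.Ioc i j ∪ Finset.Ioi j := by
      ext l
      simp only [Finset.mem_Ioi, Finset.mem_union, Finset.mem_Ioc, Fin.lt_def, Fin.le_def]
      have := Fin.lt_def.mp hij
      omega
    have hdisj : Disjoint (Finset.Ioc i j) (Finset.Ioi j) := by
      rw [Finset.disjoint_left]
      intro a ha ha'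
      exact absurd (Finset.mem_Ioc.mp ha).2 (not_le.mpr (Finset.mem_Ioi.mp ha'))
    have hsum : ∑ l ∈ Finset.Ioi i, t l =
        ∑ l ∈ Finset.Ioc i j, t l + ∑ l ∈ Finset.Ioi j, t l := by
      rw [hsplit, Finset.sum_union hdisj]
    have hpos : 0 < ∑ l ∈ Finset.Ioc i j, t l := by
      apply Finset.sum_pos
      · intro l hl
        have := (Finset.mem_Ioc.mp hl).1
        exact htpos l (by simp only [Fin.lt_def] at this; omega)
      · exact ⟨j, Finset.mem_Ioc.mpr ⟨hij, le_rfl⟩⟩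
    simp only [Qmass, ht] at *
    linarith
  have hlastQ : Qmass τ I cF ⟨m - 1, by omega⟩ = 1 := by
    have : Finset.Ioi (⟨m - 1, by omega⟩ : Fin m) = ∅ := by
      ext l
      simp only [Finset.mem_Ioi, Fin.lt_def, Finset.notMem_empty, iff_false, not_lt]
      omega
    simp [Qmass, this]
  have hQm2 : 0 ≤ Qmass τ I cF ⟨m - 2, by omega⟩ := by
    have h := hstep ⟨m - 2, by omega⟩ ⟨m - 1, by omega⟩ (by simp; omega)
    rw [h, hlastQ]
    simp only [ht]
    linarith [hlastterm]
  -- the set of indices with nonnegative Q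
  set S : Finset (Fin m) := Finset.univ.filter (fun i => 0 ≤ Qmass τ I cF i) with hS
  have hmem : ∀ i : Fin m, i ∈ S ↔ 0 ≤ Qmass τ I cF i := by
    intro i; simp [hS]
  have hSne : S.Nonempty := ⟨⟨m - 2, by omega⟩, (hmem _).mpr hQm2⟩
  set istar := S.min' hSne with histar
  have histarS : 0 ≤ Qmass τ I cF istar := (hmem _).mp (S.min'_mem hSne)
  have hmin : ∀ j : Fin m, 0 ≤ Qmass τ I cF j → istar ≤ j := by
    intro j hj
    exact S.min'_le j ((hmem _).mpr hj)
  have hneg : ∀ j : Fin m, j < istar → Qmass τ I cF j < 0 := by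
    intro j hj
    by_contra h
    exact absurd (hmin j (not_lt.mp h)) (not_le.mpr hj)
  have histpos : 0 < (istar : ℕ) := by
    rcases Nat.eq_zero_or_pos (istar : ℕ) with h0 | h
    · exfalso
      have : istar = ⟨0, by omega⟩ := Fin.ext h0
      rw [this] at histarS
      linarith
    · exact h
  have histle : (istar : ℕ) ≤ m - 2 := by
    have := hmin ⟨m - 2, by omega⟩ hQm2
    simpa [Fin.le_def] using this
  have hprevstep : Qmass τ I cF (prevF istar) = Qmass τ I cF istar - t istar := by
    apply hstep
    simp only [prevF]; omega
  have hprevlt : prevF istar < istar := by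
    simp only [Fin.lt_def, prevF]; omega
  have hQlt : Qmass τ I cF istar < t istar := by
    have := hneg (prevF istar) hprevlt
    linarith [hprevstep ▸ this]
  have hQlt1 : Qmass τ I cF istar < 1 := by
    have hlt : istar < (⟨m - 1, by omega⟩ : Fin m) := by
      simp only [Fin.lt_def]; omega
    have := hmono istar _ hlt
    rw [hlastQ] at this
    exact this
  refine ⟨istar, histpos, by omega, ⟨histarS, hQlt⟩, ?_, ⟨histarS, hQlt1⟩,
    fun j hj => hmin j hj.1, hneg⟩
  intro j hj0 hjm hQj
  have hjp : Qmass τ I cF (prevF j) = Qmass τ I cF j - t j := by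
    apply hstep; simp only [prevF]; omega
  have hjpneg : Qmass τ I cF (prevF j) < 0 := by
    have htj : t j = cF / I j * (1 / τ (prevF j) - 1 / τ j) := rfl
    rw [hjp]; linarith [hQj.2]
  -- istar ≤ j since Q j ≥ 0
  have h1 : istar ≤ j := hmin j hQj.1
  -- j ≤ istar : otherwise istar ≤ prevF j, so Q istar ≤ Q (prevF j) < 0
  have h2 : j ≤ istar := by
    by_contra h
    push_neg at h
    have hle : istar ≤ prevF j := by
      simp only [Fin.le_def, prevF]
      have := Fin.lt_def.mp h
      omega
    rcases eq_or_lt_of_le hle with heq | hlt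
    · rw [← heq] at hjpneg; linarith
    · have := hmono _ _ hlt
      linarith
  exact le_antisymm h2 h1
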